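/- arXiv:2002.11494 — 2 statements merged into one kernel-verified Lean document; each statement's English description precedes it below -/
import Mathlib

section
/- Let (Q, ≤) be a well-quasi-order. Then every downward closed subset D of Q can be written as a finite union of ideals, i.e., a finite union of downward closed subsets each of which is (upward) directed. -/
/-!
In a well-quasi-order the lower sets satisfy the descending chain condition: along a strictly
descending chain pick `xₙ ∈ Dₙ \ Dₙ₊₁`; some `xᵢ ≤ xⱼ` with `i < j` then forces `xᵢ ∈ Dᵢ₊₁`.
So we may argue by well-founded induction on lower sets. A lower set `D` that is not directed
contains `a, b` without a common upper bound in `D`, hence is the union of the strictly smaller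
lower sets `D \ ↑a` and `D \ ↑b`.
-/

namespace LowerSet

variable {α : Type*} [Preorder α]

instance wellFoundedLT_of_wellQuasiOrderedLE [WellQuasiOrderedLE α] :
    WellFoundedLT (LowerSet α) := by
  rw [WellFoundedLT, isWellFounded_iff, RelEmbedding.wellFounded_iff_isEmpty]
  refine ⟨fun f ↦ ?_⟩
  have hf : StrictAnti f := strictAnti_nat_of_succ_lt fun n ↦ f.map_rel_iff.2 n.lt_succ_self
  choose x hx hx_succ using fun n : ℕ ↦
    Set.exists_of_ssubset (coe_ssubset_coe.2 (hf n.lt_succ_self))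
  obtain ⟨i, j, hij, hle⟩ := wellQuasiOrdered_le x
  exact hx_succ i ((f (i + 1)).lower hle (hf.antitone hij (hx j)))

lemma eq_erase_sup_erase {s : LowerSet α} {a b : α}
    (hab : ∀ c ∈ s, ¬(a ≤ c ∧ b ≤ c)) : s = s.erase a ⊔ s.erase b := by
  refine le_antisymm (fun x hx ↦ ?_) (sup_le erase_le erase_le)
  by_cases hax : a ≤ x
  · exact Or.inr ⟨hx, fun hbx ↦ hab x hx ⟨hax, hbx⟩⟩
  · exact Or.inl ⟨hx, hax⟩

theorem exists_finite_isIdeal_sUnion_eq [WellFoundedLT (LowerSet α)] (s : LowerSet α) :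
    ∃ 𝓘 : Set (Set α), 𝓘.Finite ∧ (∀ I ∈ 𝓘, Order.IsIdeal I) ∧ ⋃₀ 𝓘 = s := by
  induction s using WellFoundedLT.induction with
  | _ s ih =>
    by_cases hdir : DirectedOn (· ≤ ·) (s : Set α)
    · rcases (s : Set α).eq_empty_or_nonempty with hs | hs
      · exact ⟨∅, Set.finite_empty, by simp, by simp [hs]⟩
      · refine ⟨{(s : Set α)}, Set.finite_singleton _, ?_, Set.sUnion_singleton _⟩
        rintro I rfl
        exact ⟨s.lower, hs, hdir⟩
    · obtain ⟨a, ha, b, hb, hab⟩ : ∃ a ∈ s, ∃ b ∈ s, ∀ c ∈ s, ¬(a ≤ c ∧ b ≤ c) := by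
        simpa [DirectedOn] using hdir
      obtain ⟨𝓘a, hfin_a, hideal_a, hunion_a⟩ := ih (s.erase a) (erase_lt.2 ha)
      obtain ⟨𝓘b, hfin_b, hideal_b, hunion_b⟩ := ih (s.erase b) (erase_lt.2 hb)
      refine ⟨𝓘a ∪ 𝓘b, hfin_a.union hfin_b, ?_, ?_⟩
      · rintro I (hI | hI)
        exacts [hideal_a I hI, hideal_b I hI]
      · rw [Set.sUnion_union, hunion_a, hunion_b, ← coe_sup, ← eq_erase_sup_erase hab]

end LowerSet

theorem wqo_downset_finite_union_of_ideals {Q : Type*} [Preorder Q]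
    (hwqo : ∀ f : ℕ → Q, ∃ i j : ℕ, i < j ∧ f i ≤ f j)
    (D : Set Q) (hD : ∀ x y : Q, x ≤ y → y ∈ D → x ∈ D) :
    ∃ (n : ℕ) (I : Fin n → Set Q),
      (∀ k, (∀ x y : Q, x ≤ y → y ∈ I k → x ∈ I k) ∧
        (∀ a ∈ I k, ∀ b ∈ I k, ∃ c ∈ I k, a ≤ c ∧ b ≤ c)) ∧
      D = ⋃ k, I k := by
  have : WellQuasiOrderedLE Q := ⟨hwqo⟩
  obtain ⟨𝓘, hfin, hideal, hunion⟩ :=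
    LowerSet.exists_finite_isIdeal_sUnion_eq ⟨D, fun _ _ h ↦ hD _ _ h⟩
  obtain ⟨n, I, -, rfl⟩ := hfin.fin_param
  refine ⟨n, I, fun k ↦ ?_, by rw [← Set.sUnion_range, hunion]; rfl⟩
  have hk := hideal (I k) ⟨k, rfl⟩
  exact ⟨fun _ _ h ↦ hk.IsLowerSet h, hk.Directed⟩
end

section
/- Let (L, <) be a linear order and let F be a family of nonempty convex subsets of L such that for any I₁, I₂, I₃ ∈ F, if I₁ ∩ I₃ ≠ ∅ and I₂ ∩ I₃ ≠ ∅ then I₁ ∩ I₂ ≠ ∅. Suppose I, I', J, J' ∈ F satisfy: I ∩ I' ≠ ∅, J ∩ J' ≠ ∅, and every element of I' is strictly less than every element of J'. Then every element of I is strictly less than every element of J. -/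
theorem interval_claim {L : Type*} [LinearOrder L] (F : Set (Set L))
    (hne : ∀ S ∈ F, S.Nonempty)
    (hconv : ∀ S ∈ F, ∀ a ∈ S, ∀ c ∈ S, ∀ b : L, a ≤ b → b ≤ c → b ∈ S)
    (hclo : ∀ I₁ ∈ F, ∀ I₂ ∈ F, ∀ I₃ ∈ F,
      (I₁ ∩ I₃).Nonempty → (I₂ ∩ I₃).Nonempty → (I₁ ∩ I₂).Nonempty)
    (I I' J J' : Set L) (hIF : I ∈ F) (hI'F : I' ∈ F) (hJF : J ∈ F) (hJ'F : J' ∈ F)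
    (hII' : (I ∩ I').Nonempty) (hJJ' : (J ∩ J').Nonempty)
    (hlt : ∀ x ∈ I', ∀ y ∈ J', x < y) :
    ∀ x ∈ I, ∀ y ∈ J, x < y := by
  intro x hx y hy
  by_contra hxy
  push_neg at hxy
  obtain ⟨a, haI, haI'⟩ := hII'
  obtain ⟨b, hbJ, hbJ'⟩ := hJJ'
  have hab : a < b := hlt a haI' b hbJ'
  -- I' ∩ J' is empty
  have hdisj : ¬ (I' ∩ J').Nonempty := by
    rintro ⟨c, hcI', hcJ'⟩
    exact absurd (hlt c hcI' c hcJ') (lt_irrefl c)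
  rcases le_total b x with hbx | hxb
  · -- b ∈ I by convexity, so I meets J', so I' meets J'
    have hbI : b ∈ I := hconv I hIF a haI x hx b hab.le hbx
    exact hdisj (hclo I' hI'F J' hJ'F I hIF ⟨a, haI', haI⟩ ⟨b, hbJ', hbI⟩)
  · -- x ∈ J by convexity, so I meets J, then I meets J', then I' meets J'
    have hxJ : x ∈ J := hconv J hJF y hy b hbJ x hxy hxb
    have hIJ' : (I ∩ J').Nonempty :=
      hclo I hIF J' hJ'F J hJF ⟨x, hx, hxJ⟩ ⟨b, hbJ', hbJ⟩
    exact hdisj (hclo I' hI'F J' hJ'F I hIF ⟨a, haI', haI⟩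
      (hIJ'.imp fun c ⟨h1, h2⟩ => ⟨h2, h1⟩))
end
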